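/- arXiv:2504.20333 — 3 statements merged into one kernel-verified Lean document; each statement's English description precedes it below -/
import Mathlib

section
/- (Regularity with expander mixing) Let $G$ be a bipartite $(n,d,\lambda)$-expander and $H$ a subgraph of $G$. For any $\gamma > 0$ with $\lambda \le \gamma^2/4$, there exist $p \le 4/\gamma^2$ triples $(c_i,S_i,T_i) \in \mathbb{R} \times 2^L \times 2^R$ with $\sum_i |c_i| \le 2/\gamma$, such that for all $S \subseteq L$, $T \subseteq R$: $\big| |E_H(S,T)| - \frac{d}{n}\sum_{i=1}^p c_i |S_i \cap S| \cdot |T_i \cap T| \big| \le \gamma \cdot n d$. -/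
/-!
Frieze–Kannan energy increment in `ℝ^(L × R)`. Start from the indicator vector of the edges of
`H`; while the residual has inner product more than `γ n d / 2` with the indicator vector of the
`G`-edges between some `S` and `T`, subtract its projection onto that vector. Each step lowers the
squared norm of the residual, at most `n d` initially, by at least `γ² n d / 4` and by at least
`γ n d |c| / 2`, which bounds the number of steps by `4 / γ²` and `∑ |cᵢ|` by `2 / γ`. The
approximation counts `G`-edges in the rectangles `(Sᵢ ∩ S) × (Tᵢ ∩ T)`; the expander mixing lemma
replaces them by `d / n |Sᵢ ∩ S| |Tᵢ ∩ T|` at total cost `λ d n ∑ |cᵢ| ≤ γ n d / 2`.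
-/

open Finset

open scoped Classical

/-- Number of edges of the (sub)graph `P` between `S` and `T`. -/
noncomputable def eCount {L R : Type*} (P : L → R → Prop) (S : Finset L) (T : Finset R) : ℕ :=
  ((S ×ˢ T).filter fun p => P p.1 p.2).card

open scoped RealInnerProductSpace

section WeakRegularity

variable {E ι : Type*} [NormedAddCommGroup E] [InnerProductSpace ℝ E]

lemma norm_sub_inner_div_smul_sq (h v : E) :
    ‖h - (⟪h, v⟫ / ‖v‖ ^ 2) • v‖ ^ 2 = ‖h‖ ^ 2 - ⟪h, v⟫ ^ 2 / ‖v‖ ^ 2 := by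
  rcases eq_or_ne v 0 with rfl | hv
  · simp
  have hv2 : ‖v‖ ^ 2 ≠ 0 := by positivity
  rw [norm_sub_sq_real, real_inner_smul_right, norm_smul, mul_pow, Real.norm_eq_abs, sq_abs]
  field_simp
  ring

/-- Each of the `p` projection steps lowered the energy `‖f - ∑ₖ cₖ • g (jₖ)‖²`, which starts
at most `M`, both by at least `ε² M` and by at least `ε M |cₖ|`. -/
def EnergyBudget (M ε : ℝ) (f : E) (g : ι → E) {p : ℕ} (c : Fin p → ℝ) (j : Fin p → ι) :
    Prop :=
  ‖f - ∑ k, c k • g (j k)‖ ^ 2 + p * (ε ^ 2 * M) ≤ M ∧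
    ‖f - ∑ k, c k • g (j k)‖ ^ 2 + ε * M * ∑ k, |c k| ≤ M

namespace EnergyBudget

variable {M ε : ℝ} {f : E} {g : ι → E} {p : ℕ} {c : Fin p → ℝ} {j : Fin p → ι}

lemma nil (hf : ‖f‖ ^ 2 ≤ M) : EnergyBudget M ε f g (Fin.elim0 : Fin 0 → ℝ) Fin.elim0 := by
  simp [EnergyBudget, hf]

lemma card_le (hb : EnergyBudget M ε f g c j) (hε : 0 < ε) (hM : 0 < M) :
    (p : ℝ) ≤ 1 / ε ^ 2 := by
  rw [le_div_iff₀ (by positivity)]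
  nlinarith [hb.1, sq_nonneg ‖f - ∑ k, c k • g (j k)‖]

lemma sum_abs_le (hb : EnergyBudget M ε f g c j) (hε : 0 < ε) (hM : 0 < M) :
    ∑ k, |c k| ≤ 1 / ε := by
  rw [le_div_iff₀ hε]
  nlinarith [hb.2, sq_nonneg ‖f - ∑ k, c k • g (j k)‖]

lemma cons (hb : EnergyBudget M ε f g c j) (hε : 0 < ε) (hg : ∀ i, ‖g i‖ ^ 2 ≤ M) {i : ι}
    (hi : ε * M < |⟪f - ∑ k, c k • g (j k), g i⟫|) :
    EnergyBudget M ε f g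
      (Fin.cons (⟪f - ∑ k, c k • g (j k), g i⟫ / ‖g i‖ ^ 2) c : Fin (p + 1) → ℝ)
      (Fin.cons i j) := by
  set r := f - ∑ k, c k • g (j k)
  set a := ⟪r, g i⟫
  set b := ‖g i‖ ^ 2
  have hM : 0 ≤ M := (sq_nonneg _).trans (hg i)
  have hgi : g i ≠ 0 := by
    rintro hgi
    simp only [a, hgi, inner_zero_right, abs_zero] at hi
    nlinarith
  have hb0 : 0 < b := by positivity
  have hres : f - ∑ k : Fin (p + 1), (Fin.cons (a / b) c : Fin (p + 1) → ℝ) k •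
      g ((Fin.cons i j : Fin (p + 1) → ι) k) = r - (a / b) • g i := by
    rw [Fin.sum_univ_succ]
    simp only [Fin.cons_zero, Fin.cons_succ, r]
    abel
  have hdrop_sq : ε ^ 2 * M ≤ a ^ 2 / b := by
    have hsq : (ε * M) ^ 2 < a ^ 2 := by
      rw [← sq_abs a]
      exact pow_lt_pow_left₀ hi (by positivity) two_ne_zero
    rw [le_div_iff₀ hb0]
    nlinarith [mul_le_mul_of_nonneg_left (hg i) (by positivity : 0 ≤ ε ^ 2 * M)]
  have hdrop_abs : ε * M * |a / b| ≤ a ^ 2 / b := by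
    rw [abs_div, abs_of_pos hb0, ← sq_abs a, mul_div_assoc', div_le_div_iff_of_pos_right hb0, sq]
    exact mul_le_mul_of_nonneg_right hi.le (abs_nonneg a)
  obtain ⟨h1, h2⟩ := hb
  refine ⟨?_, ?_⟩
  · rw [hres, norm_sub_inner_div_smul_sq]
    push_cast
    linarith
  · rw [hres, norm_sub_inner_div_smul_sq, Fin.sum_univ_succ]
    simp only [Fin.cons_zero, Fin.cons_succ]
    nlinarith

end EnergyBudget

theorem exists_weak_regularity_approx (g : ι → E) (f : E) {M ε : ℝ} (hε : 0 < ε)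
    (hf : ‖f‖ ^ 2 ≤ M) (hg : ∀ i, ‖g i‖ ^ 2 ≤ M) :
    ∃ (p : ℕ) (c : Fin p → ℝ) (j : Fin p → ι),
      (p : ℝ) ≤ 1 / ε ^ 2 ∧ ∑ k, |c k| ≤ 1 / ε ∧
      ∀ i, |⟪f - ∑ k, c k • g (j k), g i⟫| ≤ ε * M := by
  rcases ((sq_nonneg _).trans hf).eq_or_lt with rfl | hM
  · have hf0 : f = 0 := by simpa using hf
    exact ⟨0, Fin.elim0, Fin.elim0, by simp [hε.le], by simp [hε.le], by simp [hf0]⟩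
  suffices ∃ (p : ℕ) (c : Fin p → ℝ) (j : Fin p → ι), EnergyBudget M ε f g c j ∧
      ∀ i, |⟪f - ∑ k, c k • g (j k), g i⟫| ≤ ε * M by
    obtain ⟨p, c, j, hb, hgood⟩ := this
    exact ⟨p, c, j, hb.card_le hε hM, hb.sum_abs_le hε hM, hgood⟩
  by_contra! hbad
  have hlong : ∀ p : ℕ, ∃ (c : Fin p → ℝ) (j : Fin p → ι), EnergyBudget M ε f g c j := by
    intro p
    induction p with
    | zero => exact ⟨_, _, EnergyBudget.nil hf⟩
    | succ p ih =>
      obtain ⟨c, j, hb⟩ := ih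
      obtain ⟨i, hi⟩ := hbad p c j hb
      exact ⟨_, _, hb.cons hε hg hi⟩
  obtain ⟨c, j, hb⟩ := hlong (⌊1 / ε ^ 2⌋₊ + 1)
  have := hb.card_le hε hM
  push_cast at this
  linarith [Nat.lt_floor_add_one (1 / ε ^ 2)]

end WeakRegularity

lemma abs_sum_mul_sub_sum_mul_le {κ : Type*} (s : Finset κ) (c x y : κ → ℝ) {δ : ℝ}
    (h : ∀ k ∈ s, |x k - y k| ≤ δ) :
    |∑ k ∈ s, c k * x k - ∑ k ∈ s, c k * y k| ≤ (∑ k ∈ s, |c k|) * δ := by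
  rw [← sum_sub_distrib, sum_mul]
  refine (abs_sum_le_sum_abs _ _).trans (sum_le_sum fun k hk => ?_)
  rw [← mul_sub, abs_mul]
  exact mul_le_mul_of_nonneg_left (h k hk) (abs_nonneg _)

noncomputable def indicatorVec {α : Type*} (A : Finset α) : EuclideanSpace ℝ α :=
  WithLp.toLp 2 fun a => if a ∈ A then 1 else 0

lemma inner_indicatorVec {α : Type*} [Fintype α] [DecidableEq α] (A B : Finset α) :
    ⟪indicatorVec A, indicatorVec B⟫ = #(A ∩ B) := by
  simp only [indicatorVec, PiLp.inner_apply, RCLike.inner_apply, conj_trivial,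
    ite_zero_mul_ite_zero, mul_one, ← mem_inter]
  rw [sum_boole, filter_mem_eq_inter, univ_inter, inter_comm]

section Bipartite

variable {L R : Type*}

noncomputable def edgesBetween (P : L → R → Prop) (S : Finset L) (T : Finset R) : Finset (L × R) :=
  (S ×ˢ T).filter fun e => P e.1 e.2

lemma card_edgesBetween (P : L → R → Prop) (S : Finset L) (T : Finset R) :
    #(edgesBetween P S T) = eCount P S T :=
  rfl

lemma edgesBetween_inter_of_le {P Q : L → R → Prop} (hPQ : ∀ a b, P a b → Q a b)
    (S S' : Finset L) (T T' : Finset R) :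
    edgesBetween P S T ∩ edgesBetween Q S' T' = edgesBetween P (S ∩ S') (T ∩ T') := by
  ext e
  simp only [edgesBetween, mem_inter, mem_filter, mem_product]
  constructor
  · rintro ⟨⟨⟨hS, hT⟩, hP⟩, ⟨hS', hT'⟩, -⟩
    exact ⟨⟨⟨hS, hS'⟩, hT, hT'⟩, hP⟩
  · rintro ⟨⟨⟨hS, hS'⟩, hT, hT'⟩, hP⟩
    exact ⟨⟨⟨hS, hT⟩, hP⟩, ⟨hS', hT'⟩, hPQ _ _ hP⟩

lemma eCount_mono {P Q : L → R → Prop} (hPQ : ∀ a b, P a b → Q a b) {S S' : Finset L}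
    {T T' : Finset R} (hS : S ⊆ S') (hT : T ⊆ T') : eCount P S T ≤ eCount Q S' T' :=
  card_le_card fun e he => by
    simp only [mem_filter, mem_product] at he ⊢
    exact ⟨⟨hS he.1.1, hT he.1.2⟩, hPQ _ _ he.2⟩

lemma eCount_eq_sum_eCount_singleton (P : L → R → Prop) (S : Finset L) (T : Finset R) :
    eCount P S T = ∑ a ∈ S, eCount P {a} T := by
  simp only [eCount, card_filter, sum_product, sum_singleton]

lemma eCount_univ_of_regular [Fintype L] [Fintype R] {P : L → R → Prop} {d : ℕ}
    (hdeg : ∀ a, eCount P {a} univ = d) :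
    eCount P univ univ = Fintype.card L * d := by
  rw [eCount_eq_sum_eCount_singleton, sum_congr rfl fun a _ => hdeg a, sum_const, card_univ,
    smul_eq_mul]

noncomputable def edgeVec (P : L → R → Prop) (S : Finset L) (T : Finset R) :
    EuclideanSpace ℝ (L × R) :=
  indicatorVec (edgesBetween P S T)

variable [Fintype L] [Fintype R]

lemma inner_edgeVec_of_le {P Q : L → R → Prop} (hPQ : ∀ a b, P a b → Q a b)
    (S S' : Finset L) (T T' : Finset R) :
    ⟪edgeVec P S T, edgeVec Q S' T'⟫ = eCount P (S ∩ S') (T ∩ T') := by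
  rw [edgeVec, edgeVec, inner_indicatorVec, edgesBetween_inter_of_le hPQ, card_edgesBetween]

lemma norm_edgeVec_sq (P : L → R → Prop) (S : Finset L) (T : Finset R) :
    ‖edgeVec P S T‖ ^ 2 = eCount P S T := by
  rw [← real_inner_self_eq_norm_sq, inner_edgeVec_of_le (fun _ _ h => h), inter_self, inter_self]

end Bipartite

theorem regularity_with_expander_mixing_general {L R : Type*} [Fintype L] [Fintype R]
    (n d : ℕ) (hL : Fintype.card L = n)
    (G H : L → R → Prop) (hsub : ∀ ℓ r, H ℓ r → G ℓ r)
    (hdegL : ∀ ℓ : L, eCount G {ℓ} Finset.univ = d)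
    (lam γ : ℝ) (hγ : 0 < γ) (hlam0 : 0 ≤ lam) (hlam : lam ≤ γ ^ 2 / 4)
    (hEML : ∀ (S : Finset L) (T : Finset R),
      |(eCount G S T : ℝ) - ((d : ℝ) / n) * S.card * T.card| ≤ lam * d * n) :
    ∃ (p : ℕ) (c : Fin p → ℝ) (Sc : Fin p → Finset L) (Tc : Fin p → Finset R),
      (p : ℝ) ≤ 4 / γ ^ 2 ∧
      (∑ i, |c i|) ≤ 2 / γ ∧
      ∀ (S : Finset L) (T : Finset R),
        |(eCount H S T : ℝ) -
            ((d : ℝ) / n) * ∑ i, c i * ((Sc i ∩ S).card : ℝ) * ((Tc i ∩ T).card : ℝ)| ≤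
          γ * n * d := by
  have hcount_le {P : L → R → Prop} (hP : ∀ ℓ r, P ℓ r → G ℓ r) (S : Finset L) (T : Finset R) :
      (eCount P S T : ℝ) ≤ n * d := by
    rw [← hL, ← Nat.cast_mul, ← eCount_univ_of_regular hdegL, Nat.cast_le]
    exact eCount_mono hP (subset_univ S) (subset_univ T)
  obtain ⟨p, c, j, hp, hc, hreg⟩ := exists_weak_regularity_approx
    (fun ST : Finset L × Finset R => edgeVec G ST.1 ST.2) (edgeVec H univ univ) (M := n * d)
    (half_pos hγ) (by rw [norm_edgeVec_sq]; exact hcount_le hsub _ _)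
    (fun ST => by rw [norm_edgeVec_sq]; exact hcount_le (fun _ _ h => h) _ _)
  have hc' : ∑ k, |c k| ≤ 2 / γ := by convert hc using 1; ring
  refine ⟨p, c, fun k => (j k).1, fun k => (j k).2, by convert hp using 1; ring, hc',
    fun S T => ?_⟩
  have hcut : |(eCount H S T : ℝ) - ∑ k, c k * eCount G ((j k).1 ∩ S) ((j k).2 ∩ T)| ≤
      γ / 2 * (n * d) := by
    simpa only [inner_sub_left, sum_inner, real_inner_smul_left, inner_edgeVec_of_le hsub,
      inner_edgeVec_of_le (fun _ _ h => h), univ_inter] using hreg (S, T)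
  have hmix := abs_sum_mul_sub_sum_mul_le univ c
    (fun k => (eCount G ((j k).1 ∩ S) ((j k).2 ∩ T) : ℝ))
    (fun k => (d : ℝ) / n * ((j k).1 ∩ S).card * ((j k).2 ∩ T).card) fun k _ => hEML _ _
  have hcoef : (∑ k, |c k|) * (lam * d * n) ≤ 2 / γ * (γ ^ 2 / 4 * d * n) := by
    gcongr
  have hsplit : (d : ℝ) / n * ∑ k, c k * ((j k).1 ∩ S).card * ((j k).2 ∩ T).card =
      ∑ k, c k * ((d : ℝ) / n * ((j k).1 ∩ S).card * ((j k).2 ∩ T).card) := by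
    rw [mul_sum]
    exact sum_congr rfl fun k _ => by ring
  rw [hsplit]
  calc _ ≤ γ / 2 * (n * d) + 2 / γ * (γ ^ 2 / 4 * d * n) := by
        refine (abs_sub_le _ _ _).trans (add_le_add hcut (hmix.trans hcoef))
    _ = γ * n * d := by field_simp; ring

/-- Weak regularity for subgraphs of an expander, combined with the expander mixing lemma:
if `G` is an `(n,d,λ)`-expander (i.e. a `d`-regular bipartite graph with parts of size `n`
satisfying the mixing bound) and `H` is a subgraph of `G`, then for any `γ > 0` with
`λ ≤ γ²/4`, there exist `p ≤ 4/γ²` triples `(cᵢ, Sᵢ, Tᵢ)` with `∑ᵢ |cᵢ| ≤ 2/γ` such that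
for all `S ⊆ L`, `T ⊆ R`,
`| |E_H(S,T)| - (d/n) ∑ᵢ cᵢ |Sᵢ ∩ S|·|Tᵢ ∩ T| | ≤ γ n d`. -/
theorem regularity_with_expander_mixing {L R : Type*} [Fintype L] [Fintype R]
    (n d : ℕ) (hL : Fintype.card L = n) (hR : Fintype.card R = n)
    (G H : L → R → Prop) (hsub : ∀ ℓ r, H ℓ r → G ℓ r)
    (hdegL : ∀ ℓ : L, eCount G {ℓ} Finset.univ = d)
    (hdegR : ∀ r : R, eCount G Finset.univ {r} = d)
    (lam γ : ℝ) (hγ : 0 < γ) (hlam0 : 0 ≤ lam) (hlam : lam ≤ γ ^ 2 / 4)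
    (hEML : ∀ (S : Finset L) (T : Finset R),
      |(eCount G S T : ℝ) - ((d : ℝ) / n) * S.card * T.card| ≤ lam * d * n) :
    ∃ (p : ℕ) (c : Fin p → ℝ) (Sc : Fin p → Finset L) (Tc : Fin p → Finset R),
      (p : ℝ) ≤ 4 / γ ^ 2 ∧
      (∑ i, |c i|) ≤ 2 / γ ∧
      ∀ (S : Finset L) (T : Finset R),
        |(eCount H S T : ℝ) -
            ((d : ℝ) / n) * ∑ i, c i * ((Sc i ∩ S).card : ℝ) * ((Tc i ∩ T).card : ℝ)| ≤
          γ * n * d :=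
  regularity_with_expander_mixing_general n d hL G H hsub hdegL lam γ hγ hlam0 hlam hEML
end

section
/- (Local list membership for AEL) Let $G=(L,R,E)$ be an $(n,d,\lambda)$-expander and let $g, h \in \Sigma_{\mathrm{in}}^E$ be edge labelings with $\Delta_R(g,h) \le \beta$, i.e., $g$ and $h$ agree on all edges at a $(1-\beta)$ fraction of right vertices. If $\lambda \le \gamma \varepsilon$, then $\Pr_{\ell \in L}[\Delta(g_\ell, h_\ell) > \beta + \varepsilon] \le \gamma$, where $\Delta(g_\ell,h_\ell)$ is the fraction of the $d$ edges at $\ell$ on which $g$ and $h$ differ. -/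
open Finset

open scoped Classical

lemma eCount_eq_sum {L R : Type*} (P : L → R → Prop) (S : Finset L) (T : Finset R) :
    eCount P S T = ∑ a ∈ S, (T.filter fun b => P a b).card := by
  unfold eCount
  rw [Finset.card_eq_sum_ones, Finset.sum_finset_product _ S (fun a => T.filter fun b => P a b)]
  · exact Finset.sum_congr rfl fun a _ => (Finset.card_eq_sum_ones _).symm
  · intro p
    simp only [Finset.mem_filter, Finset.mem_product]
    tauto

/-- Local list membership for AEL: if `G` is an `(n,d,λ)`-expander, `g, h` are edge labelings
agreeing on all edges at a `(1-β)` fraction of right vertices (`Δ_R(g,h) ≤ β`), and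
`λ ≤ γ·ε`, then the fraction of left vertices `ℓ` whose local disagreement exceeds `β + ε`
is at most `γ`. -/
theorem ael_local_list_membership {L R Ain : Type*} [Fintype L] [Fintype R]
    (n d : ℕ) (hL : Fintype.card L = n) (hR : Fintype.card R = n)
    (G : L → R → Prop)
    (hdegL : ∀ ℓ : L, eCount G {ℓ} Finset.univ = d)
    (hdegR : ∀ r : R, eCount G Finset.univ {r} = d)
    (lam β ε γ : ℝ) (hε : 0 < ε) (hγ : 0 < γ) (hlam : lam ≤ γ * ε)
    (hEML : ∀ (S : Finset L) (T : Finset R),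
      |(eCount G S T : ℝ) - ((d : ℝ) / n) * S.card * T.card| ≤ lam * d * n)
    (g h : L → R → Ain)
    (hβ : ((Finset.univ.filter fun r : R => ∃ ℓ, G ℓ r ∧ g ℓ r ≠ h ℓ r).card : ℝ) ≤ β * n) :
    ((Finset.univ.filter fun ℓ : L =>
        (β + ε) * d < ((Finset.univ.filter fun r : R => G ℓ r ∧ g ℓ r ≠ h ℓ r).card : ℝ)).card : ℝ)
      ≤ γ * n := by
  set R' : Finset R := Finset.univ.filter fun r : R => ∃ ℓ, G ℓ r ∧ g ℓ r ≠ h ℓ r with hR'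
  set L' : Finset L := Finset.univ.filter fun ℓ : L =>
      (β + ε) * d < ((Finset.univ.filter fun r : R => G ℓ r ∧ g ℓ r ≠ h ℓ r).card : ℝ) with hL'
  -- trivial case: L' empty
  rcases L'.eq_empty_or_nonempty with hLe | hLne
  · rw [hLe]; simp; positivity
  -- n = 0 case: impossible since L' nonempty implies L nonempty
  rcases Nat.eq_zero_or_pos n with hn | hn
  · exfalso
    have hc : L'.card = 0 := by
      have h1 := Finset.card_le_univ L'
      rw [hL, hn] at h1
      omega
    exact hLne.ne_empty (Finset.card_eq_zero.mp hc)
  -- d = 0 case: impossible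
  rcases Nat.eq_zero_or_pos d with hd | hd
  · exfalso
    obtain ⟨ℓ, hℓ⟩ := hLne
    have hmem := (Finset.mem_filter.mp hℓ).2
    have hsub : (Finset.univ.filter fun r : R => G ℓ r ∧ g ℓ r ≠ h ℓ r) ⊆
        (Finset.univ.filter fun r : R => G ℓ r) := by
      intro r hr
      simp only [Finset.mem_filter] at hr ⊢
      exact ⟨hr.1, hr.2.1⟩
    have hdeg := hdegL ℓ
    rw [eCount_eq_sum] at hdeg
    simp only [Finset.sum_singleton] at hdeg
    have hcard := Finset.card_le_card hsub
    rw [hdeg, hd] at hcard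
    have : ((Finset.univ.filter fun r : R => G ℓ r ∧ g ℓ r ≠ h ℓ r).card : ℝ) = 0 := by
      exact_mod_cast Nat.le_zero.mp hcard
    rw [this, hd] at hmem
    simp at hmem
  -- main case
  have hd0 : (0:ℝ) < d := by exact_mod_cast hd
  have hn0 : (0:ℝ) < n := by exact_mod_cast hn
  -- β ≥ 0
  have hβ0 : 0 ≤ β := by
    have : (0:ℝ) ≤ (R'.card : ℝ) := by positivity
    nlinarith [mul_pos hε hd0]
  -- lower bound on eCount G L' R'
  have key1 : (β + ε) * d * L'.card < (eCount G L' R' : ℝ) := by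
    rw [eCount_eq_sum]
    push_cast
    have : ∀ ℓ ∈ L', (β + ε) * d < ((R'.filter fun r => G ℓ r).card : ℝ) := by
      intro ℓ hℓ
      have hmem := (Finset.mem_filter.mp hℓ).2
      have hsub : (Finset.univ.filter fun r : R => G ℓ r ∧ g ℓ r ≠ h ℓ r) ⊆
          (R'.filter fun r => G ℓ r) := by
        intro r hr
        simp only [Finset.mem_filter, hR'] at hr ⊢
        exact ⟨⟨Finset.mem_univ r, ⟨ℓ, hr.2⟩⟩, hr.2.1⟩
      have := Finset.card_le_card hsub
      calc (β + ε) * d < ((Finset.univ.filter fun r : R => G ℓ r ∧ g ℓ r ≠ h ℓ r).card : ℝ) := hmem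
        _ ≤ ((R'.filter fun r => G ℓ r).card : ℝ) := by exact_mod_cast this
    calc (β + ε) * d * L'.card = ∑ _ℓ ∈ L', (β + ε) * d := by
          rw [Finset.sum_const, nsmul_eq_mul]; ring
      _ < ∑ ℓ ∈ L', ((R'.filter fun r => G ℓ r).card : ℝ) :=
          Finset.sum_lt_sum_of_nonempty hLne this
  -- upper bound from EML
  have key2 : (eCount G L' R' : ℝ) ≤ β * d * L'.card + lam * d * n := by
    have habs := hEML L' R'
    have h1 : (eCount G L' R' : ℝ) ≤ ((d:ℝ)/n) * L'.card * R'.card + lam * d * n := by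
      have := abs_le.mp habs
      linarith [this.2]
    have h2 : ((d:ℝ)/n) * L'.card * R'.card ≤ ((d:ℝ)/n) * L'.card * (β * n) := by
      apply mul_le_mul_of_nonneg_left hβ (by positivity)
    have h3 : ((d:ℝ)/n) * L'.card * (β * n) = β * d * L'.card := by
      field_simp
    linarith
  have hlamd : lam * d * n ≤ γ * ε * d * n := by
    nlinarith [mul_nonneg (sub_nonneg.mpr hlam) (le_of_lt (mul_pos hd0 hn0))]
  have hLcard0 : (0:ℝ) ≤ (L'.card : ℝ) := by positivity
  nlinarith [mul_pos hε hd0]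
end

section
/- (Distance of bipartite Tanner codes) Let $G=(L,R,E)$ be an $(n,d,\lambda)$-expander, and let ${\mathcal C}_1, {\mathcal C}_2 \subseteq \Sigma^d$ be codes of distance $\delta_L$ and $\delta_R$ respectively. Define the Tanner code ${\mathcal C}_{\mathrm{Tan}} = \{h \in \Sigma^E : h_\ell \in {\mathcal C}_1 \text{ for all } \ell \in L, \ h_r \in {\mathcal C}_2 \text{ for all } r \in R\}$. Then any two distinct codewords of ${\mathcal C}_{\mathrm{Tan}}$ differ on at least a $\sqrt{\delta_L \delta_R}(\sqrt{\delta_L\delta_R} - \lambda)$ fraction of the edges; in particular the distance is at least $\delta_L \delta_R - \lambda$. -/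
open Finset

open scoped Classical

/-!
Let `F` be the set of edges on which `h₁` and `h₂` differ, and `S ⊆ L`, `T ⊆ R` the vertices
incident to `F`. At a vertex of `S` the two local views are distinct codewords of `C₁`, so that
vertex carries at least `δL d` edges of `F`; hence `|F| ≥ δL d |S|`, likewise `|F| ≥ δR d |T|`,
and so `|F| ≥ √(δL δR) d x` with `x = √(|S||T|)`. As `F ⊆ E(S, T)`, the mixing lemma gives
`|F| ≤ (d/n) x² + λ d x`. Comparing the two bounds yields `x ≥ n (√(δL δR) - λ)`, which fed back
into the lower bound is the claim; the weaker bound follows from `√(δL δR) ≤ 1`.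
-/

section Counting

variable {L R : Type*}

theorem eCount_eq_sum_card (P : L → R → Prop) (S : Finset L) (T : Finset R) :
    eCount P S T = ∑ ℓ ∈ S, #{r ∈ T | P ℓ r} := by
  simp only [eCount, card_filter, sum_product]

theorem eCount_swap (P : L → R → Prop) (S : Finset L) (T : Finset R) :
    eCount P S T = eCount (fun r ℓ => P ℓ r) T S := by
  simp only [eCount_eq_sum_card, card_filter]
  exact sum_comm

theorem eCount_univ_le [Fintype L] [Fintype R] {P Q : L → R → Prop} {S : Finset L}
    {T : Finset R} (hPQ : ∀ ℓ r, P ℓ r → ℓ ∈ S ∧ r ∈ T ∧ Q ℓ r) :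
    eCount P univ univ ≤ eCount Q S T :=
  card_le_card fun p hp => by
    simp only [mem_filter, mem_product] at hp ⊢
    obtain ⟨hS, hT, hQ⟩ := hPQ _ _ hp.2
    exact ⟨⟨hS, hT⟩, hQ⟩

theorem mul_card_le_eCount [Fintype L] [Fintype R] {P : L → R → Prop} {S : Finset L} {c : ℝ}
    (hc : ∀ ℓ ∈ S, c ≤ #{r | P ℓ r}) : c * #S ≤ eCount P univ univ := by
  rw [eCount_eq_sum_card, Nat.cast_sum, mul_comm, ← nsmul_eq_mul]
  exact (card_nsmul_le_sum S _ c hc).trans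
    (sum_le_sum_of_subset_of_nonneg (subset_univ S) fun _ _ _ => Nat.cast_nonneg _)

end Counting

theorem mul_le_card_filter_ne {X A : Type*} [Fintype X] {d : ℕ} {P : X → Prop}
    (e : Fin d ≃ {x // P x}) {C : Set (Fin d → A)} {δ : ℝ}
    (hC : ∀ c ∈ C, ∀ c' ∈ C, c ≠ c' → δ * d ≤ (#{k | c k ≠ c' k} : ℝ))
    {f g : X → A} (hf : (fun k => f (e k).1) ∈ C) (hg : (fun k => g (e k).1) ∈ C)
    (hne : ∃ x, P x ∧ f x ≠ g x) : δ * d ≤ (#{x | P x ∧ f x ≠ g x} : ℝ) := by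
  obtain ⟨x, hx, hfgx⟩ := hne
  have hview : (fun k => f (e k).1) ≠ fun k => g (e k).1 := fun h =>
    hfgx (by simpa using congrFun h (e.symm ⟨x, hx⟩))
  refine (hC _ hf _ hg hview).trans (Nat.cast_le.mpr (card_le_card_of_injOn (fun k => (e k).1)
    (fun k hk => ?_) fun k _ k' _ h => e.injective (Subtype.ext h)))
  simp only [coe_filter, mem_univ, true_and, Set.mem_ofPred_eq] at hk ⊢
  exact ⟨(e k).2, hk⟩

theorem sqrt_mul_mul_mul_sqrt_le {u v a b d f : ℝ} (hu : 0 ≤ u) (hv : 0 ≤ v) (ha : 0 ≤ a)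
    (hb : 0 ≤ b) (hd : 0 ≤ d) (hua : u * d * a ≤ f) (hvb : v * d * b ≤ f) :
    √(u * v) * d * √(a * b) ≤ f := by
  have hf : 0 ≤ f := (by positivity : 0 ≤ u * d * a).trans hua
  refine (pow_le_pow_iff_left₀ (by positivity) hf two_ne_zero).mp ?_
  calc (√(u * v) * d * √(a * b)) ^ 2 = (u * d * a) * (v * d * b) := by
        rw [mul_pow, mul_pow, Real.sq_sqrt (by positivity), Real.sq_sqrt (by positivity)]; ring
    _ ≤ f ^ 2 := by rw [sq]; exact mul_le_mul hua hvb (by positivity) hf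

theorem mul_sub_mul_le_of_le_quadratic {s x n d f lam : ℝ} (hs : 0 ≤ s) (hx : 0 < x)
    (hn : 0 ≤ n) (hd : 0 ≤ d) (hlow : s * d * x ≤ f) (hup : f ≤ d / n * x ^ 2 + lam * d * x) :
    s * (s - lam) * (n * d) ≤ f := by
  -- `d / 0 = 0`, so this is an inequality rather than an equation
  have hnd : n * (d / n) ≤ d := by
    rcases hn.eq_or_lt with rfl | hn
    · simpa using hd
    · rw [mul_div_cancel₀ _ hn.ne']
  have hgap : d * ((s - lam) * n - x) ≤ 0 := by
    refine nonpos_of_mul_nonpos_left ?_ hx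
    nlinarith
  nlinarith

theorem sub_mul_le_sqrt_mul_sub {p lam m : ℝ} (hp0 : 0 ≤ p) (hp1 : p ≤ 1) (hlam : 0 ≤ lam)
    (hm : 0 ≤ m) : (p - lam) * m ≤ √p * (√p - lam) * m := by
  refine mul_le_mul_of_nonneg_right ?_ hm
  have : √p ≤ 1 := Real.sqrt_le_one.mpr hp1
  nlinarith [Real.mul_self_sqrt hp0]

theorem mul_card_support_le_eCount_of_local_views {L R A : Type*} [Fintype L] [Fintype R] {d : ℕ}
    {G : L → R → Prop} (ord : ∀ ℓ, Fin d ≃ {r // G ℓ r}) {C : Set (Fin d → A)} {δ : ℝ}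
    (hC : ∀ c ∈ C, ∀ c' ∈ C, c ≠ c' → δ * d ≤ (#{k | c k ≠ c' k} : ℝ)) {h₁ h₂ : L → R → A}
    (h₁C : ∀ ℓ, (fun k => h₁ ℓ (ord ℓ k).1) ∈ C) (h₂C : ∀ ℓ, (fun k => h₂ ℓ (ord ℓ k).1) ∈ C) :
    δ * d * #{ℓ | ∃ r, G ℓ r ∧ h₁ ℓ r ≠ h₂ ℓ r} ≤
      eCount (fun ℓ r => G ℓ r ∧ h₁ ℓ r ≠ h₂ ℓ r) univ univ := by
  refine mul_card_le_eCount fun ℓ hℓ => ?_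
  -- the two filters carry different (classical) decidability instances
  convert mul_le_card_filter_ne (ord ℓ) hC (h₁C ℓ) (h₂C ℓ) (by simpa using hℓ)

theorem tanner_distance_general {L R A : Type*} [Fintype L] [Fintype R]
    (n d : ℕ)
    (G : L → R → Prop)
    (ordL : ∀ ℓ : L, Fin d ≃ {r : R // G ℓ r})
    (ordR : ∀ r : R, Fin d ≃ {ℓ : L // G ℓ r})
    (lam δL δR : ℝ) (hlam : 0 ≤ lam)
    (hδL0 : 0 < δL) (hδL1 : δL ≤ 1) (hδR0 : 0 < δR) (hδR1 : δR ≤ 1)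
    (hEML : ∀ (S : Finset L) (T : Finset R),
      |(eCount G S T : ℝ) - ((d : ℝ) / n) * S.card * T.card| ≤
        lam * d * Real.sqrt ((S.card : ℝ) * T.card))
    (C₁ C₂ : Set (Fin d → A))
    (hC₁ : ∀ c ∈ C₁, ∀ c' ∈ C₁, c ≠ c' →
      δL * d ≤ ((Finset.univ.filter fun k : Fin d => c k ≠ c' k).card : ℝ))
    (hC₂ : ∀ c ∈ C₂, ∀ c' ∈ C₂, c ≠ c' →
      δR * d ≤ ((Finset.univ.filter fun k : Fin d => c k ≠ c' k).card : ℝ))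
    (h₁ h₂ : L → R → A)
    (h₁L : ∀ ℓ : L, (fun k => h₁ ℓ (ordL ℓ k).1) ∈ C₁)
    (h₁R : ∀ r : R, (fun k => h₁ (ordR r k).1 r) ∈ C₂)
    (h₂L : ∀ ℓ : L, (fun k => h₂ ℓ (ordL ℓ k).1) ∈ C₁)
    (h₂R : ∀ r : R, (fun k => h₂ (ordR r k).1 r) ∈ C₂)
    (hne : ∃ ℓ r, G ℓ r ∧ h₁ ℓ r ≠ h₂ ℓ r) :
    Real.sqrt (δL * δR) * (Real.sqrt (δL * δR) - lam) * (n * d) ≤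
        (eCount (fun ℓ r => G ℓ r ∧ h₁ ℓ r ≠ h₂ ℓ r) Finset.univ Finset.univ : ℝ) ∧
      (δL * δR - lam) * (n * d) ≤
        (eCount (fun ℓ r => G ℓ r ∧ h₁ ℓ r ≠ h₂ ℓ r) Finset.univ Finset.univ : ℝ) := by
  obtain ⟨ℓ₀, r₀, hne₀⟩ := hne
  set S : Finset L := {ℓ | ∃ r, G ℓ r ∧ h₁ ℓ r ≠ h₂ ℓ r}
  set T : Finset R := {r | ∃ ℓ, G ℓ r ∧ h₁ ℓ r ≠ h₂ ℓ r}
  have hS : (0 : ℝ) < #S := Nat.cast_pos.mpr (card_pos.mpr ⟨ℓ₀, by simpa [S] using ⟨r₀, hne₀⟩⟩)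
  have hT : (0 : ℝ) < #T := Nat.cast_pos.mpr (card_pos.mpr ⟨r₀, by simpa [T] using ⟨ℓ₀, hne₀⟩⟩)
  have hleft := mul_card_support_le_eCount_of_local_views ordL hC₁ h₁L h₂L
  have hright := mul_card_support_le_eCount_of_local_views (G := fun r ℓ => G ℓ r) ordR hC₂
    (h₁ := fun r ℓ => h₁ ℓ r) (h₂ := fun r ℓ => h₂ ℓ r) h₁R h₂R
  rw [← eCount_swap] at hright
  have hupper : (eCount (fun ℓ r => G ℓ r ∧ h₁ ℓ r ≠ h₂ ℓ r) univ univ : ℝ) ≤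
      d / n * (√(#S * #T)) ^ 2 + lam * d * √(#S * #T) := by
    rw [Real.sq_sqrt (by positivity)]
    have hsub : eCount (fun ℓ r => G ℓ r ∧ h₁ ℓ r ≠ h₂ ℓ r) univ univ ≤ eCount G S T :=
      eCount_univ_le fun ℓ r h => ⟨by simpa [S] using ⟨r, h⟩, by simpa [T] using ⟨ℓ, h⟩, h.1⟩
    linarith [(abs_le.mp (hEML S T)).2, (Nat.cast_le (α := ℝ)).mpr hsub]
  have hmain := mul_sub_mul_le_of_le_quadratic (Real.sqrt_nonneg _) (by positivity)
    n.cast_nonneg d.cast_nonneg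
    (sqrt_mul_mul_mul_sqrt_le hδL0.le hδR0.le hS.le hT.le d.cast_nonneg hleft hright) hupper
  exact ⟨hmain, (sub_mul_le_sqrt_mul_sub (by positivity) (mul_le_one₀ hδL1 hδR0.le hδR1) hlam
    (by positivity)).trans hmain⟩

/-- Distance of bipartite Tanner codes: if `G` is an `(n,d,λ)`-expander (with fixed orderings
`ordL`, `ordR` of the edges at each vertex, and satisfying the strong expander mixing lemma)
and `C₁, C₂ ⊆ Σ^d` are codes of distance `δL`, `δR`, then any two Tanner codewords `h₁ ≠ h₂`
(edge labelings whose local views lie in `C₁` on the left and `C₂` on the right) differ on at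
least a `√(δLδR)(√(δLδR) - λ)` fraction of the `n·d` edges; in particular on at least a
`δLδR - λ` fraction. -/
theorem tanner_distance {L R A : Type*} [Fintype L] [Fintype R]
    (n d : ℕ) (hL : Fintype.card L = n) (hR : Fintype.card R = n)
    (G : L → R → Prop)
    (ordL : ∀ ℓ : L, Fin d ≃ {r : R // G ℓ r})
    (ordR : ∀ r : R, Fin d ≃ {ℓ : L // G ℓ r})
    (lam δL δR : ℝ) (hlam : 0 ≤ lam)
    (hδL0 : 0 < δL) (hδL1 : δL ≤ 1) (hδR0 : 0 < δR) (hδR1 : δR ≤ 1)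
    (hEML : ∀ (S : Finset L) (T : Finset R),
      |(eCount G S T : ℝ) - ((d : ℝ) / n) * S.card * T.card| ≤
        lam * d * Real.sqrt ((S.card : ℝ) * T.card))
    (C₁ C₂ : Set (Fin d → A))
    (hC₁ : ∀ c ∈ C₁, ∀ c' ∈ C₁, c ≠ c' →
      δL * d ≤ ((Finset.univ.filter fun k : Fin d => c k ≠ c' k).card : ℝ))
    (hC₂ : ∀ c ∈ C₂, ∀ c' ∈ C₂, c ≠ c' →
      δR * d ≤ ((Finset.univ.filter fun k : Fin d => c k ≠ c' k).card : ℝ))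
    (h₁ h₂ : L → R → A)
    (h₁L : ∀ ℓ : L, (fun k => h₁ ℓ (ordL ℓ k).1) ∈ C₁)
    (h₁R : ∀ r : R, (fun k => h₁ (ordR r k).1 r) ∈ C₂)
    (h₂L : ∀ ℓ : L, (fun k => h₂ ℓ (ordL ℓ k).1) ∈ C₁)
    (h₂R : ∀ r : R, (fun k => h₂ (ordR r k).1 r) ∈ C₂)
    (hne : ∃ ℓ r, G ℓ r ∧ h₁ ℓ r ≠ h₂ ℓ r) :
    Real.sqrt (δL * δR) * (Real.sqrt (δL * δR) - lam) * (n * d) ≤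
        (eCount (fun ℓ r => G ℓ r ∧ h₁ ℓ r ≠ h₂ ℓ r) Finset.univ Finset.univ : ℝ) ∧
      (δL * δR - lam) * (n * d) ≤
        (eCount (fun ℓ r => G ℓ r ∧ h₁ ℓ r ≠ h₂ ℓ r) Finset.univ Finset.univ : ℝ) :=
  tanner_distance_general n d G ordL ordR lam δL δR hlam hδL0 hδL1 hδR0 hδR1 hEML C₁ C₂ hC₁ hC₂ h₁
    h₂ h₁L h₁R h₂L h₂R hne
end
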